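/- Let q > 0, ϑ > 0, η > 0, α ∈ [0,1], and let n ≥ 1 and p ≥ 0 be integers. Define the degree vector (p)_i := p − ⌊α(n+1−i)p/n⌋ for 1 ≤ i ≤ n−1 and (p)_n := p, and set μ := αpη/n and ν := min{ϑ/2, μ}. Then Σ_{i=2}^{n} e^{-q((n−i)ϑ + (p)_i η)} ≤ (e^{qϑ/2}/(1 − e^{-qϑ/2})) e^{-q(1−α)pη} e^{-qnν}. -/
import Mathlib


set_option maxHeartbeats 2000000
noncomputable section

/-- with the degree vector `(p)_i = p − ⌊α(n+1−i)p/n⌋` for `1 ≤ i ≤ n−1`,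
`(p)_n = p`, and `μ = αpη/n`, `ν = min{ϑ/2, μ}`, one has
`Σ_{i=2}^n e^{-q((n−i)ϑ + (p)_i η)} ≤ (e^{qϑ/2}/(1−e^{-qϑ/2})) e^{-q(1−α)pη} e^{-qnν}`. -/
theorem stmt14 (q ϑ η α : ℝ) (n p : ℕ) (hq : 0 < q) (hϑ : 0 < ϑ) (hη : 0 < η)
    (hα1 : 0 ≤ α) (hα2 : α ≤ 1) (hn : 1 ≤ n)
    (pv : ℕ → ℝ)
    (hpv : ∀ i, pv i = if i < n then (p : ℝ) - ⌊α * ((n : ℝ) + 1 - i) * p / n⌋ else (p : ℝ))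
    (μ ν : ℝ) (hμ : μ = α * p * η / n) (hν : ν = min (ϑ / 2) μ) :
    ∑ i ∈ Finset.Icc 2 n, Real.exp (-(q * (((n : ℝ) - i) * ϑ + pv i * η))) ≤
      (Real.exp (q * ϑ / 2) / (1 - Real.exp (-(q * ϑ / 2)))) *
        Real.exp (-(q * (1 - α) * p * η)) * Real.exp (-(q * n * ν)) := by
  have hn' : (1:ℝ) ≤ (n:ℝ) := by exact_mod_cast hn
  have hN : (0:ℝ) < (n:ℝ) := by linarith
  have hμ0 : 0 ≤ μ := by rw [hμ]; positivity
  have hν1 : ν ≤ ϑ/2 := by rw [hν]; exact min_le_left _ _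
  have hν2 : ν ≤ μ := by rw [hν]; exact min_le_right _ _
  have hν0 : 0 ≤ ν := by rw [hν]; exact le_min (by linarith) hμ0
  obtain ⟨r, hr⟩ : ∃ r, r = Real.exp (-(q*ϑ/2)) := ⟨_, rfl⟩
  have hr0 : 0 < r := hr ▸ Real.exp_pos _
  have hr1 : r < 1 := by
    rw [hr, Real.exp_lt_one_iff]
    nlinarith
  obtain ⟨A, hA⟩ : ∃ A, A = Real.exp (q*ϑ/2) * (Real.exp (-(q*(1-α)*(p:ℝ)*η)) * Real.exp (-(q*(n:ℝ)*ν))) := ⟨_, rfl⟩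
  have key : ∀ i ∈ Finset.Icc 2 n,
      Real.exp (-(q * (((n:ℝ) - i)*ϑ + pv i * η))) ≤ r^(n-i) * A := by
    intro i hi
    obtain ⟨h2, hin⟩ := Finset.mem_Icc.mp hi
    have hIle : (i:ℝ) ≤ (n:ℝ) := by exact_mod_cast hin
    have hI2 : (2:ℝ) ≤ (i:ℝ) := by exact_mod_cast h2
    have hpvi : ((1-α)*(p:ℝ) + α*((i:ℝ)-1)*(p:ℝ)/(n:ℝ)) ≤ pv i := by
      have hx : α*((n:ℝ)+1-(i:ℝ))*(p:ℝ)/(n:ℝ) = α*(p:ℝ) - α*((i:ℝ)-1)*(p:ℝ)/(n:ℝ) := by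
        field_simp; ring
      rw [hpv i]
      by_cases hc : i < n
      · rw [if_pos hc]
        have hf : ((⌊α*((n:ℝ)+1-(i:ℝ))*(p:ℝ)/(n:ℝ)⌋ : ℤ) : ℝ) ≤
            α*((n:ℝ)+1-(i:ℝ))*(p:ℝ)/(n:ℝ) := Int.floor_le _
        linarith [hx ▸ hf]
      · rw [if_neg hc]
        have hieq : (i:ℝ) = (n:ℝ) := by
          have : i = n := le_antisymm hin (not_lt.mp hc)
          exact_mod_cast this
        rw [hieq]
        have hdiv : α*((n:ℝ)-1)*(p:ℝ)/(n:ℝ) ≤ α*(p:ℝ) := by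
          rw [div_le_iff₀ hN]; nlinarith
        linarith
    have hμη : α*((i:ℝ)-1)*(p:ℝ)/(n:ℝ) * η = ((i:ℝ)-1) * μ := by
      rw [hμ]; field_simp
    have h1 : ((n:ℝ)-(i:ℝ))*(ϑ/2) + (1-α)*(p:ℝ)*η + (n:ℝ)*ν - ϑ/2 ≤
        ((n:ℝ) - (i:ℝ))*ϑ + pv i * η := by
      have hb : (1-α)*(p:ℝ)*η + ((i:ℝ)-1)*μ ≤ pv i * η := by
        have := mul_le_mul_of_nonneg_right hpvi hη.le
        nlinarith [hμη]
      nlinarith [mul_nonneg (by linarith : (0:ℝ) ≤ (n:ℝ)-(i:ℝ)) (by linarith : (0:ℝ) ≤ ϑ/2 - ν),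
        mul_nonneg (by linarith : (0:ℝ) ≤ (i:ℝ)-1) (by linarith : (0:ℝ) ≤ μ - ν)]
    have hcast : ((n - i : ℕ) : ℝ) = (n:ℝ) - (i:ℝ) := by
      rw [Nat.cast_sub hin]
    have hpow : r^(n-i) * A =
        Real.exp (((n:ℝ)-(i:ℝ)) * (-(q*ϑ/2)) + (q*ϑ/2 + (-(q*(1-α)*(p:ℝ)*η) + -(q*(n:ℝ)*ν)))) := by
      rw [hr, hA, Real.exp_add, Real.exp_add, Real.exp_add, ← Real.exp_nat_mul, hcast]
    rw [hpow]
    apply Real.exp_le_exp.mpr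
    have h2 := mul_le_mul_of_nonneg_left h1 hq.le
    ring_nf at h2 ⊢
    linarith
  calc ∑ i ∈ Finset.Icc 2 n, Real.exp (-(q * (((n:ℝ) - i)*ϑ + pv i * η)))
      ≤ ∑ i ∈ Finset.Icc 2 n, r^(n-i) * A := Finset.sum_le_sum key
    _ = (∑ i ∈ Finset.Icc 2 n, r^(n-i)) * A := by rw [Finset.sum_mul]
    _ = (∑ j ∈ Finset.range (n-1), r^j) * A := by
        congr 1
        apply Finset.sum_nbij' (fun i => n - i) (fun j => n - j)
        · intro i hi; simp only [Finset.mem_Icc] at hi; simp only [Finset.mem_range]; omega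
        · intro j hj; simp only [Finset.mem_range] at hj; simp only [Finset.mem_Icc]; omega
        · intro i hi; simp only [Finset.mem_Icc] at hi; omega
        · intro j hj; simp only [Finset.mem_range] at hj; omega
        · intro i hi; rfl
    _ ≤ (1/(1-r)) * A := by
        apply mul_le_mul_of_nonneg_right _ (by rw [hA]; positivity)
        rw [geom_sum_eq (ne_of_lt hr1)]
        have e : (r^(n-1)-1)/(r-1) = (1-r^(n-1))/(1-r) := by
          rw [div_eq_div_iff (by linarith) (by linarith)]; ring
        rw [e, div_le_div_iff₀ (by linarith) (by linarith)]
        nlinarith [pow_nonneg hr0.le (n-1)]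
    _ = (Real.exp (q * ϑ / 2) / (1 - Real.exp (-(q * ϑ / 2)))) *
        Real.exp (-(q * (1 - α) * (p:ℝ) * η)) * Real.exp (-(q * (n:ℝ) * ν)) := by
        rw [hA, hr]
        ring
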